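/- Let G₁ and G₂ be connected finite simple graphs on vertex sets {1,…,k₁} and {1,…,k₂} with Laplacian matrices L₁ and L₂, let s ∈ {1,…,k₂}, and suppose every eigenvector of L₂ has a nonzero s-th entry. Let L = I_{k₁} ⊗ L₂ + L₁ ⊗ (e_s e_sᵀ) be the composite matrix. Then for every vertex w ∈ {1,…,k₁}, the pair (L₁, e_w) is controllable if and only if the pair (L, e_{(w,s)}) is controllable, where e_{(w,s)} is the standard basis vector of ℝ^{k₁·k₂} supported at position (w,s). -/

import Mathlib

/-- The composite matrix `L = I_{k₁} ⊗ L₂ + L₁ ⊗ (e_s e_sᵀ)`, indexed by pairs. -/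
def composite {k₁ k₂ : ℕ} (L₁ : Matrix (Fin k₁) (Fin k₁) ℝ) (L₂ : Matrix (Fin k₂) (Fin k₂) ℝ)
    (s : Fin k₂) : Matrix (Fin k₁ × Fin k₂) (Fin k₁ × Fin k₂) ℝ :=
  Matrix.of fun p q =>
    (if p.1 = q.1 then L₂ p.2 q.2 else 0) +
    L₁ p.1 q.1 * ((if p.2 = s then (1 : ℝ) else 0) * (if q.2 = s then (1 : ℝ) else 0))

/-- A pair `(M, b)` is controllable if `b, M b, M² b, …` span the whole space. -/
def Controllable {n : Type*} [Fintype n] [DecidableEq n]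
    (M : Matrix n n ℝ) (b : n → ℝ) : Prop :=
  Submodule.span ℝ (Set.range fun m : ℕ => (M ^ m).mulVec b) = ⊤

/-!
For a symmetric matrix `M`, the pair `(M, b)` is controllable iff no eigenvector of `M` is
orthogonal to `b`: the orthogonal complement of a proper Krylov subspace is `M`-invariant, so it
contains an eigenvector.

Let `v` be an eigenvector of `L` for `λ`, with block rows `vᵢ = v (i, ·)` and column
`u = v (·, s)`. Then `(λ - L₂) vᵢ = (L₁ u)ᵢ e_s` for every `i`. If `λ` is an eigenvalue of `L₂`,
pairing with an eigenvector `y` (which has `y s ≠ 0`) gives `L₁ u = 0`; otherwise `λ - L₂` is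
injective and the `vᵢ` are proportional, so `L₁ u` is proportional to `u`. Either way `u` is an
eigenvector of `L₁` with `u w = v (w, s)` (and `u ≠ 0`, since no eigenvector of `L₂` vanishes at
`s`). Conversely, if `L₁ x = μ x`, then `x ⊗ y` is an eigenvector of `L` for any eigenvector `y`
of `L₂ + μ e_s e_sᵀ`, and it vanishes at `(w, s)` whenever `x w = 0`.
-/

open Matrix

theorem LinearMap.IsSymmetric.exists_hasEigenvector_mem {𝕜 E : Type*} [RCLike 𝕜]
    [NormedAddCommGroup E] [InnerProductSpace 𝕜 E] [FiniteDimensional 𝕜 E]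
    {T : Module.End 𝕜 E} (hT : T.IsSymmetric) {p : Submodule 𝕜 E}
    (hp : p ∈ T.invtSubmodule) (hp₀ : p ≠ ⊥) :
    ∃ (μ : 𝕜) (v : E), v ∈ p ∧ T.HasEigenvector μ v := by
  have : Nontrivial p := Submodule.nontrivial_iff_ne_bot.mpr hp₀
  obtain ⟨v, hv⟩ :=
    (hT.restrict_invariant hp).hasEigenvalue_iSup_of_finiteDimensional.exists_hasEigenvector
  exact ⟨_, v, v.2, Module.End.mem_eigenspace_iff.mpr (congrArg Subtype.val hv.apply_eq_smul),
    by simpa using hv.2⟩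

namespace Matrix.IsSymm

variable {n : Type*} [Fintype n] [DecidableEq n] {M : Matrix n n ℝ}

theorem exists_eigenvector_forall_dotProduct_eq_zero (hM : M.IsSymm)
    {p : Submodule ℝ (n → ℝ)} (hp : ∀ x ∈ p, M *ᵥ x ∈ p) (hp_top : p ≠ ⊤) :
    ∃ v ≠ 0, (∃ μ : ℝ, M *ᵥ v = μ • v) ∧ ∀ x ∈ p, v ⬝ᵥ x = 0 := by
  set q := p.comap (WithLp.linearEquiv 2 ℝ (n → ℝ)).toLinearMap
  have hT : (toEuclideanLin M).IsSymmetric :=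
    isSymmetric_toEuclideanLin_iff.mpr (isHermitian_iff_isSymm.mpr hM)
  have hq : q ∈ Module.End.invtSubmodule (toEuclideanLin M) := fun x hx => hp _ hx
  have hq_top : q ≠ ⊤ := fun h =>
    hp_top (Submodule.eq_top_iff'.mpr fun x =>
      (h.symm ▸ Submodule.mem_top : WithLp.toLp 2 x ∈ q))
  obtain ⟨μ, y, hyq, hy⟩ := hT.exists_hasEigenvector_mem
    (hT.orthogonalComplement_mem_invtSubmodule hq) (Submodule.orthogonal_eq_bot_iff.not.mpr hq_top)
  refine ⟨WithLp.ofLp y, by simpa using hy.2, ⟨μ, congrArg WithLp.ofLp hy.apply_eq_smul⟩, ?_⟩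
  intro x hx
  simpa [EuclideanSpace.inner_eq_star_dotProduct, dotProduct_comm] using hyq (WithLp.toLp 2 x) hx

theorem dotProduct_pow_mulVec (hM : M.IsSymm) {v : n → ℝ} {μ : ℝ}
    (hv : M *ᵥ v = μ • v) (b : n → ℝ) (m : ℕ) : v ⬝ᵥ (M ^ m) *ᵥ b = μ ^ m * (v ⬝ᵥ b) := by
  induction m with
  | zero => simp
  | succ m ih =>
    rw [pow_succ', ← mulVec_mulVec, dotProduct_mulVec, ← mulVec_transpose, hM.eq, hv,
      smul_dotProduct, ih, smul_eq_mul, pow_succ', mul_assoc]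

theorem exists_eigenvector [Nonempty n] (hM : M.IsSymm) :
    ∃ v ≠ 0, ∃ μ : ℝ, M *ᵥ v = μ • v := by
  obtain ⟨v, hv, hμ, -⟩ := hM.exists_eigenvector_forall_dotProduct_eq_zero (p := ⊥)
    (by simp) bot_ne_top
  exact ⟨v, hv, hμ⟩

end Matrix.IsSymm

section Controllable

variable {n : Type*} [Fintype n] [DecidableEq n] {M : Matrix n n ℝ}

theorem mulVec_mem_span_range_pow_mulVec (b : n → ℝ) :
    ∀ x ∈ Submodule.span ℝ (Set.range fun m : ℕ => (M ^ m) *ᵥ b),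
      M *ᵥ x ∈ Submodule.span ℝ (Set.range fun m : ℕ => (M ^ m) *ᵥ b) := by
  refine (Submodule.span_le (p := (Submodule.span ℝ _).comap (toLin' M))).mpr ?_
  rintro _ ⟨m, rfl⟩
  exact Submodule.subset_span ⟨m + 1, by simp [pow_succ', mulVec_mulVec]⟩

theorem controllable_iff_forall_eigenvector_dotProduct_ne_zero (hM : M.IsSymm) (b : n → ℝ) :
    Controllable M b ↔ ∀ v ≠ 0, (∃ μ : ℝ, M *ᵥ v = μ • v) → v ⬝ᵥ b ≠ 0 := by
  constructor
  · rintro hc v hv ⟨μ, hμ⟩ hvb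
    have hK : ∀ x ∈ Submodule.span ℝ (Set.range fun m : ℕ => (M ^ m) *ᵥ b), v ⬝ᵥ x = 0 := by
      intro x hx
      induction hx using Submodule.span_induction with
      | mem x hx =>
        obtain ⟨m, rfl⟩ := hx
        simp [hM.dotProduct_pow_mulVec hμ, hvb]
      | zero => simp
      | add x y _ _ hx hy => simp [dotProduct_add, hx, hy]
      | smul c x _ hx => simp [dotProduct_smul, hx]
    exact hv (dotProduct_self_eq_zero.mp (hK v (hc ▸ Submodule.mem_top)))
  · intro h
    by_contra hc
    obtain ⟨v, hv, hμ, hvK⟩ :=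
      hM.exists_eigenvector_forall_dotProduct_eq_zero (mulVec_mem_span_range_pow_mulVec b) hc
    exact h v hv hμ (by simpa using hvK b (Submodule.subset_span ⟨0, by simp⟩))

end Controllable

theorem exists_eq_smul_of_mul_eq_mul {ι K : Type*} [Field K] {u c : ι → K} (hu : u ≠ 0)
    (h : ∀ i j, c i * u j = c j * u i) : ∃ μ : K, c = μ • u := by
  obtain ⟨i, hi⟩ := Function.ne_iff.mp hu
  refine ⟨c i / u i, funext fun j => ?_⟩
  rw [Pi.smul_apply, smul_eq_mul, div_mul_eq_mul_div, eq_div_iff hi, h i j]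

section Composite

variable {k₁ k₂ : ℕ} {L₁ : Matrix (Fin k₁) (Fin k₁) ℝ} {L₂ : Matrix (Fin k₂) (Fin k₂) ℝ}
  {s : Fin k₂}

theorem composite_isSymm (h₁ : L₁.IsSymm) (h₂ : L₂.IsSymm) : (composite L₁ L₂ s).IsSymm := by
  refine IsSymm.ext fun ⟨i, a⟩ ⟨j, b⟩ => ?_
  simp only [composite, of_apply, h₁.apply, h₂.apply]
  by_cases hij : i = j
  · subst hij; ring
  · rw [if_neg (Ne.symm hij), if_neg hij]; ring

theorem composite_mulVec_apply (v : Fin k₁ × Fin k₂ → ℝ) (i : Fin k₁) (a : Fin k₂) :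
    (composite L₁ L₂ s *ᵥ v) (i, a) =
      (L₂ *ᵥ fun b => v (i, b)) a +
        (Pi.single s ((L₁ *ᵥ fun j => v (j, s)) i) : Fin k₂ → ℝ) a := by
  simp only [mulVec, dotProduct, composite, of_apply, Fintype.sum_prod_type, add_mul,
    Finset.sum_add_distrib, Pi.single_apply]
  congr 1
  · rw [Finset.sum_eq_single i (fun j _ hji => by simp [Ne.symm hji]) (by simp)]
    simp
  · by_cases has : a = s
    · subst has
      simp [Finset.sum_ite_eq', mul_comm]
    · simp [has]

theorem composite_mulVec_tensor {x : Fin k₁ → ℝ} {μ : ℝ} (hx : L₁ *ᵥ x = μ • x)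
    (y : Fin k₂ → ℝ) :
    composite L₁ L₂ s *ᵥ (fun p => x p.1 * y p.2) =
      fun p => x p.1 * ((L₂ + single s s μ) *ᵥ y) p.2 := by
  funext ⟨i, a⟩
  have hrow : (fun b => x i * y b) = x i • y := rfl
  have hcol : (fun j => x j * y s) = y s • x := funext fun j => mul_comm _ _
  rw [composite_mulVec_apply, hrow, hcol, mulVec_smul, mulVec_smul, hx, add_mulVec,
    single_mulVec]
  by_cases has : a = s
  · subst has; simp; ring
  · simp [has]

theorem eq_zero_of_mulVec_add_single_eq_smul (hL₂ : L₂.IsSymm) {y : Fin k₂ → ℝ} {lam : ℝ}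
    (hy : L₂ *ᵥ y = lam • y) (hys : y s ≠ 0) {x : Fin k₂ → ℝ} {α : ℝ}
    (hx : L₂ *ᵥ x + Pi.single s α = lam • x) : α = 0 := by
  have h := congrArg (y ⬝ᵥ ·) hx
  simp only [dotProduct_add, dotProduct_single, dotProduct_smul, smul_eq_mul] at h
  rw [dotProduct_mulVec, ← mulVec_transpose, hL₂.eq, hy, smul_dotProduct, smul_eq_mul,
    add_eq_left, mul_eq_zero] at h
  exact h.resolve_left hys

theorem mul_apply_eq_of_mulVec_add_single_eq_smul (hL₂ : L₂.IsSymm)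
    (h₂ : ∀ v : Fin k₂ → ℝ, v ≠ 0 → (∃ μ : ℝ, L₂ *ᵥ v = μ • v) → v s ≠ 0)
    {x₁ x₂ : Fin k₂ → ℝ} {α₁ α₂ lam : ℝ} (hx₁ : L₂ *ᵥ x₁ + Pi.single s α₁ = lam • x₁)
    (hx₂ : L₂ *ᵥ x₂ + Pi.single s α₂ = lam • x₂) : α₁ * x₂ s = α₂ * x₁ s := by
  by_cases hlam : ∃ y ≠ 0, L₂ *ᵥ y = lam • y
  · obtain ⟨y, hy, hylam⟩ := hlam
    have hys := h₂ y hy ⟨lam, hylam⟩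
    rw [eq_zero_of_mulVec_add_single_eq_smul hL₂ hylam hys hx₁,
      eq_zero_of_mulVec_add_single_eq_smul hL₂ hylam hys hx₂, zero_mul, zero_mul]
  · have hz : L₂ *ᵥ (α₂ • x₁ - α₁ • x₂) = lam • (α₂ • x₁ - α₁ • x₂) := by
      rw [mulVec_sub, mulVec_smul, mulVec_smul, eq_sub_of_add_eq hx₁, eq_sub_of_add_eq hx₂]
      funext b
      by_cases hbs : b = s
      · subst hbs; simp; ring
      · simp [hbs]; ring
    have hz₀ : α₂ • x₁ - α₁ • x₂ = 0 := by
      by_contra hne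
      exact hlam ⟨_, hne, hz⟩
    have := congrFun hz₀ s
    simp only [Pi.sub_apply, Pi.smul_apply, smul_eq_mul, Pi.zero_apply] at this
    linarith

theorem composite_eigenvector_column (hL₂ : L₂.IsSymm)
    (h₂ : ∀ v : Fin k₂ → ℝ, v ≠ 0 → (∃ μ : ℝ, L₂ *ᵥ v = μ • v) → v s ≠ 0)
    {v : Fin k₁ × Fin k₂ → ℝ} (hv : v ≠ 0) {lam : ℝ} (hvlam : composite L₁ L₂ s *ᵥ v = lam • v) :
    (fun j => v (j, s)) ≠ 0 ∧ ∃ μ : ℝ, L₁ *ᵥ (fun j => v (j, s)) = μ • fun j => v (j, s) := by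
  have hrow : ∀ i, L₂ *ᵥ (fun a => v (i, a)) + Pi.single s ((L₁ *ᵥ fun j => v (j, s)) i) =
      lam • fun a => v (i, a) := fun i =>
    funext fun a => by rw [Pi.add_apply, ← composite_mulVec_apply, hvlam]; rfl
  have hcol : (fun j => v (j, s)) ≠ 0 := by
    intro hcol
    refine hv (funext fun ⟨i, a⟩ => congrFun (?_ : (fun b => v (i, b)) = 0) a)
    by_contra hne
    have hi := hrow i
    rw [hcol, mulVec_zero, Pi.zero_apply, Pi.single_zero, add_zero] at hi
    exact h₂ _ hne ⟨lam, hi⟩ (congrFun hcol i)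
  exact ⟨hcol, exists_eq_smul_of_mul_eq_mul hcol fun i j =>
    mul_apply_eq_of_mulVec_add_single_eq_smul hL₂ h₂ (hrow i) (hrow j)⟩

theorem controllable_composite_of_controllable (hL₁ : L₁.IsSymm) (hL₂ : L₂.IsSymm)
    (h₂ : ∀ v : Fin k₂ → ℝ, v ≠ 0 → (∃ μ : ℝ, L₂ *ᵥ v = μ • v) → v s ≠ 0) (w : Fin k₁)
    (h : Controllable L₁ (Pi.single w 1)) :
    Controllable (composite L₁ L₂ s) (Pi.single (w, s) 1) := by
  rw [controllable_iff_forall_eigenvector_dotProduct_ne_zero hL₁] at h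
  rw [controllable_iff_forall_eigenvector_dotProduct_ne_zero (composite_isSymm hL₁ hL₂)]
  simp only [dotProduct_single_one] at h ⊢
  rintro v hv ⟨lam, hvlam⟩
  obtain ⟨hcol, heig⟩ := composite_eigenvector_column hL₂ h₂ hv hvlam
  exact h _ hcol heig

theorem controllable_of_controllable_composite (hL₁ : L₁.IsSymm) (hL₂ : L₂.IsSymm)
    (w : Fin k₁) (h : Controllable (composite L₁ L₂ s) (Pi.single (w, s) 1)) :
    Controllable L₁ (Pi.single w 1) := by
  rw [controllable_iff_forall_eigenvector_dotProduct_ne_zero (composite_isSymm hL₁ hL₂)] at h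
  rw [controllable_iff_forall_eigenvector_dotProduct_ne_zero hL₁]
  simp only [dotProduct_single_one] at h ⊢
  rintro x hx ⟨μ, hxμ⟩ hxw
  have : Nonempty (Fin k₂) := ⟨s⟩
  obtain ⟨y, hy, ν, hyν⟩ := (hL₂.add (transpose_single s s μ)).exists_eigenvector
  refine h (fun p => x p.1 * y p.2) ?_ ⟨ν, ?_⟩ (mul_eq_zero_of_left hxw _)
  · obtain ⟨i, hi⟩ := Function.ne_iff.mp hx
    obtain ⟨a, ha⟩ := Function.ne_iff.mp hy
    exact Function.ne_iff.mpr ⟨(i, a), mul_ne_zero hi ha⟩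
  · rw [composite_mulVec_tensor hxμ, hyν]
    funext p
    simp only [Pi.smul_apply, smul_eq_mul]
    ring

end Composite

theorem stmt_6_general (k₁ k₂ : ℕ)
    (G₁ : SimpleGraph (Fin k₁)) [DecidableRel G₁.Adj]
    (G₂ : SimpleGraph (Fin k₂)) [DecidableRel G₂.Adj]
    (s : Fin k₂)
    (h₂ : ∀ v : Fin k₂ → ℝ, v ≠ 0 → (∃ μ : ℝ, (G₂.lapMatrix ℝ).mulVec v = μ • v) → v s ≠ 0)
    (w : Fin k₁) :
    Controllable (G₁.lapMatrix ℝ) (Pi.single w 1) ↔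
      Controllable (composite (G₁.lapMatrix ℝ) (G₂.lapMatrix ℝ) s) (Pi.single (w, s) 1) :=
  ⟨controllable_composite_of_controllable (G₁.isSymm_lapMatrix ℝ) (G₂.isSymm_lapMatrix ℝ) h₂ w,
    controllable_of_controllable_composite (G₁.isSymm_lapMatrix ℝ) (G₂.isSymm_lapMatrix ℝ) w⟩

theorem stmt_6 (k₁ k₂ : ℕ)
    (G₁ : SimpleGraph (Fin k₁)) [DecidableRel G₁.Adj] (hG₁ : G₁.Connected)
    (G₂ : SimpleGraph (Fin k₂)) [DecidableRel G₂.Adj] (hG₂ : G₂.Connected)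
    (s : Fin k₂)
    (h₂ : ∀ v : Fin k₂ → ℝ, v ≠ 0 → (∃ μ : ℝ, (G₂.lapMatrix ℝ).mulVec v = μ • v) → v s ≠ 0)
    (w : Fin k₁) :
    Controllable (G₁.lapMatrix ℝ) (Pi.single w 1) ↔
      Controllable (composite (G₁.lapMatrix ℝ) (G₂.lapMatrix ℝ) s) (Pi.single (w, s) 1) :=
  stmt_6_general k₁ k₂ G₁ G₂ s h₂ w
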